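/- Let M_{2k} be the Möbius ladder with 2k steps, viewed as the cycle C_{4k} with chords joining each pair of antipodal vertices v_i and v_{i+2k}. For any far-polar mapping c of M_{2k} to O_r, the winding number of the shortest-arc extension c^{sh} restricted to the even-indexed component C_{4k}^{#2e} of the exact square of C_{4k} is odd. -/
import Mathlib


open scoped Classical

/-- The representative in `[0, r)` of a point of the circle `O_r` (of circumference `r`),
i.e. the clockwise arc length from the base point `0`. -/
noncomputable def dlift (r : ℝ) (hr : 0 < r) (x : AddCircle r) : ℝ :=
  haveI : Fact (0 < r) := ⟨hr⟩
  ((AddCircle.equivIco r 0 x : Set.Ico (0 : ℝ) (0 + r)) : ℝ)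

/-- The representative in `(-r/2, r/2]` of a point of the circle `O_r`: the signed length of
the shortest arc from the base point (positive = clockwise). -/
noncomputable def slift (r : ℝ) (hr : 0 < r) (x : AddCircle r) : ℝ :=
  haveI : Fact (0 < r) := ⟨hr⟩
  ((AddCircle.equivIoc r (-(r / 2)) x : Set.Ioc (-(r / 2)) (-(r / 2) + r)) : ℝ)

/-- A mapping `c` of the vertices of the cycle `C_n` to the circle `O_r` is far-polar if for
each `i` the points `c (i-1)` and `c (i+1)` partition `O_r` into two arcs of unequal lengths
and `c i` lies strictly inside the larger arc.  Here `dlift r hr (c (i+1) - c (i-1))` is the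
length of the clockwise arc from `c (i-1)` to `c (i+1)`. -/
def FarPolarCycle (n : ℕ) (r : ℝ) (hr : 0 < r) (c : ZMod n → AddCircle r) : Prop :=
  ∀ i : ZMod n,
    dlift r hr (c (i + 1) - c (i - 1)) ≠ r / 2 ∧
    (if r / 2 < dlift r hr (c (i + 1) - c (i - 1)) then
      0 < dlift r hr (c i - c (i - 1)) ∧
        dlift r hr (c i - c (i - 1)) < dlift r hr (c (i + 1) - c (i - 1))
    else
      dlift r hr (c (i + 1) - c (i - 1)) < dlift r hr (c i - c (i - 1)))

/-- A mapping `c` of the vertices of a graph `G` to the circle `O_r` is far-polar if for each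
vertex `x` there is a diameter (through the points `t` and `t + r/2`) strictly separating
`c x` from the images of all neighbors of `x`. -/
def FarPolarGraph {V : Type*} (r : ℝ) (hr : 0 < r) (G : SimpleGraph V)
    (c : V → AddCircle r) : Prop :=
  ∀ x : V, ∃ t : AddCircle r,
    0 < dlift r hr (c x - t) ∧ dlift r hr (c x - t) < r / 2 ∧
    ∀ y : V, G.Adj x y → r / 2 < dlift r hr (c y - t)

/-- The Möbius ladder `M_{2k}` with `2k` steps: the cycle `C_{4k}` together with the chords
joining each pair of antipodal vertices `v_i` and `v_{i+2k}`. -/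
def mobiusLadder (k : ℕ) : SimpleGraph (ZMod (4 * k)) :=
  SimpleGraph.fromRel (fun i j => j = i + 1 ∨ j = i + 2 * k)

section aux
variable {r : ℝ} (hr : 0 < r)

lemma dlift_mem (x : AddCircle r) : 0 ≤ dlift r hr x ∧ dlift r hr x < r := by
  haveI : Fact (0 < r) := ⟨hr⟩
  have := (AddCircle.equivIco r 0 x).2
  simpa [dlift] using this

lemma coe_dlift (x : AddCircle r) : ((dlift r hr x : ℝ) : AddCircle r) = x := by
  haveI : Fact (0 < r) := ⟨hr⟩
  exact (AddCircle.equivIco r 0).symm_apply_apply x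

lemma coe_slift (x : AddCircle r) : ((slift r hr x : ℝ) : AddCircle r) = x := by
  haveI : Fact (0 < r) := ⟨hr⟩
  exact (AddCircle.equivIoc r (-(r/2))).symm_apply_apply x

lemma slift_mem (x : AddCircle r) : -(r/2) < slift r hr x ∧ slift r hr x ≤ r/2 := by
  haveI : Fact (0 < r) := ⟨hr⟩
  have := (AddCircle.equivIoc r (-(r/2)) x).2
  have h1 : -(r/2) < slift r hr x := this.1
  have h2 : slift r hr x ≤ -(r/2) + r := this.2
  exact ⟨h1, by linarith⟩

lemma dlift_coe {y : ℝ} (h0 : 0 ≤ y) (h1 : y < r) : dlift r hr ((y : ℝ) : AddCircle r) = y := by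
  haveI : Fact (0 < r) := ⟨hr⟩
  show ((AddCircle.equivIco r 0 (↑y) : Set.Ico (0:ℝ) (0+r)) : ℝ) = y
  have : AddCircle.equivIco r 0 (↑y) = ⟨toIcoMod hr 0 y, toIcoMod_mem_Ico hr 0 y⟩ :=
    QuotientAddGroup.equivIcoMod_coe hr 0 y
  rw [this]
  exact (toIcoMod_eq_self hr).mpr ⟨h0, by simpa using h1⟩

lemma slift_coe {y : ℝ} (h0 : -(r/2) < y) (h1 : y ≤ r/2) : slift r hr ((y : ℝ) : AddCircle r) = y := by
  haveI : Fact (0 < r) := ⟨hr⟩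
  show ((AddCircle.equivIoc r (-(r/2)) (↑y) : Set.Ioc (-(r/2)) (-(r/2)+r)) : ℝ) = y
  have : AddCircle.equivIoc r (-(r/2)) (↑y) = ⟨toIocMod hr (-(r/2)) y, toIocMod_mem_Ioc hr _ y⟩ :=
    QuotientAddGroup.equivIocMod_coe hr _ y
  rw [this]
  exact (toIocMod_eq_self hr).mpr ⟨h0, by linarith⟩

end aux

section aux2
variable {r : ℝ} (hr : 0 < r)

lemma dlift_zero : dlift r hr 0 = 0 := by
  have h : ((0:ℝ) : AddCircle r) = 0 := by norm_cast
  rw [← h, dlift_coe hr le_rfl hr]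

lemma dlift_pos {x : AddCircle r} (hx : x ≠ 0) : 0 < dlift r hr x := by
  rcases eq_or_lt_of_le (dlift_mem hr x).1 with h | h
  · exfalso; apply hx
    rw [← coe_dlift hr x, ← h]; norm_cast
  · exact h

lemma dlift_neg_eq {x : AddCircle r} (hx : x ≠ 0) : dlift r hr (-x) = r - dlift r hr x := by
  have hm := dlift_mem hr x
  have hp := dlift_pos hr hx
  have h : -x = (((r - dlift r hr x) : ℝ) : AddCircle r) := by
    rw [AddCircle.coe_sub, AddCircle.coe_period, coe_dlift hr x, zero_sub]
  rw [h, dlift_coe hr (by linarith) (by linarith)]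

lemma sub_eq_int_mul {a b : ℝ} (h : ((a:ℝ) : AddCircle r) = ((b:ℝ) : AddCircle r)) :
    ∃ q : ℤ, a - b = q * r := by
  have h0 : ((a - b : ℝ) : AddCircle r) = 0 := by rw [AddCircle.coe_sub, h, sub_self]
  rcases (AddCircle.coe_eq_zero_iff r).mp h0 with ⟨n, hn⟩
  exact ⟨n, by rw [← hn]; simp [zsmul_eq_mul]⟩

lemma neg_coe_half : -(((r/2 : ℝ)) : AddCircle r) = ((r/2 : ℝ) : AddCircle r) := by
  have : ((r/2 : ℝ) : AddCircle r) + ((r/2 : ℝ) : AddCircle r) = 0 := by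
    rw [← AddCircle.coe_add]
    have : (r/2 + r/2 : ℝ) = r := by ring
    rw [this, AddCircle.coe_period]
  exact neg_eq_of_add_eq_zero_left this

lemma frame_slift {t x y : AddCircle r} (hx : dlift r hr (x - t) < r/2)
    (hy : dlift r hr (y - t) < r/2) :
    slift r hr (y - x) = dlift r hr (y - t) - dlift r hr (x - t) := by
  have hx0 := (dlift_mem hr (x - t)).1
  have hy0 := (dlift_mem hr (y - t)).1
  have hxy : y - x = (((dlift r hr (y - t) - dlift r hr (x - t)) : ℝ) : AddCircle r) := by
    rw [AddCircle.coe_sub, coe_dlift, coe_dlift]; abel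
  rw [hxy, slift_coe hr (by linarith) (by linarith)]

lemma frame_dlift {t x y : AddCircle r} (hx : dlift r hr (x - t) < r/2)
    (hy : r/2 < dlift r hr (y - t)) :
    dlift r hr (y - x) = dlift r hr (y - t) - dlift r hr (x - t) := by
  have hx0 := (dlift_mem hr (x - t)).1
  have hy1 := (dlift_mem hr (y - t)).2
  have hxy : y - x = (((dlift r hr (y - t) - dlift r hr (x - t)) : ℝ) : AddCircle r) := by
    rw [AddCircle.coe_sub, coe_dlift, coe_dlift]; abel
  rw [hxy, dlift_coe hr (by linarith) (by linarith)]

lemma dlift_add_half_far {x : AddCircle r} (h : r/2 < dlift r hr x) :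
    dlift r hr (x + ((r/2 : ℝ) : AddCircle r)) = dlift r hr x - r/2 := by
  have hm := (dlift_mem hr x).2
  have hx : x + ((r/2 : ℝ) : AddCircle r) = (((dlift r hr x - r/2) : ℝ) : AddCircle r) := by
    rw [AddCircle.coe_sub, coe_dlift, sub_eq_add_neg, neg_coe_half]
  rw [hx, dlift_coe hr (by linarith) (by linarith)]

lemma dlift_add_half_near {x : AddCircle r} (h : dlift r hr x < r/2) :
    dlift r hr (x + ((r/2 : ℝ) : AddCircle r)) = dlift r hr x + r/2 := by
  have hm := (dlift_mem hr x).1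
  have hx : x + ((r/2 : ℝ) : AddCircle r) = (((dlift r hr x + r/2) : ℝ) : AddCircle r) := by
    rw [AddCircle.coe_add, coe_dlift]
  rw [hx, dlift_coe hr (by linarith) (by linarith)]

end aux2

/-- For any far-polar mapping `c` of the Möbius ladder `M_{2k}` to `O_r`, the winding number of
the shortest-arc extension `c^{sh}` restricted to the even-indexed component `C_{4k}^{#2e}` of
the exact square of `C_{4k}` — the integer `z` with `∑ slift = z * r` along the cycle
`c 0, c 2, c 4, …` — is odd. -/
theorem winding_mobius_odd (k : ℕ) (hk : 1 ≤ k) (r : ℝ) (hr : 0 < r)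
    (c : ZMod (4 * k) → AddCircle r) (hc : FarPolarGraph r hr (mobiusLadder k) c) :
    ∃ z : ℤ, Odd z ∧
      (∑ j ∈ Finset.range (2 * k),
          slift r hr
            (c ((2 * j + 2 : ℕ) : ZMod (4 * k)) - c ((2 * j : ℕ) : ZMod (4 * k)))) = z * r := by
  haveI h4k : NeZero (4 * k) := ⟨by omega⟩
  haveI h1k : Fact (1 < 4 * k) := ⟨by omega⟩
  set κ : ZMod (4 * k) := ((2 * k : ℕ) : ZMod (4 * k)) with hκdef
  -- basic parity facts
  have hparnat : ∀ a : ℕ, Even ((a : ZMod (4 * k)).val) ↔ Even a := by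
    intro a
    rw [ZMod.val_natCast, Nat.even_iff, Nat.even_iff,
      Nat.mod_mod_of_dvd a ⟨2 * k, by ring⟩]
  have hval1 : ∀ v : ZMod (4 * k), (Even ((v + 1).val) ↔ ¬ Even v.val) := by
    intro v
    have h : (v + 1).val = (v.val + 1) % (4 * k) := by rw [ZMod.val_add, ZMod.val_one]
    rw [h, Nat.even_iff, Nat.mod_mod_of_dvd _ ⟨2 * k, by ring⟩, ← Nat.even_iff,
      Nat.even_add_one]
  have hvalκ : ∀ v : ZMod (4 * k), (Even ((v + κ).val) ↔ Even v.val) := by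
    intro v
    have h : (v + κ).val = (v.val + 2 * k) % (4 * k) := by
      rw [ZMod.val_add]
      congr 1
      rw [hκdef, ZMod.val_natCast, Nat.mod_eq_of_lt (by omega)]
    rw [h, Nat.even_iff, Nat.mod_mod_of_dvd _ ⟨2 * k, by ring⟩, ← Nat.even_iff,
      Nat.even_add]
    have h2 : Even (2 * k) := even_two_mul k
    tauto
  -- adjacency
  have adj1 : ∀ v : ZMod (4 * k), (mobiusLadder k).Adj v (v + 1) := by
    intro v
    rw [mobiusLadder, SimpleGraph.fromRel_adj]
    refine ⟨fun h => ?_, Or.inl (Or.inl rfl)⟩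
    have h1 : (1 : ZMod (4 * k)) = 0 := (left_eq_add.mp h)
    have := (ZMod.natCast_eq_zero_iff 1 (4 * k)).mp (by exact_mod_cast h1)
    have := Nat.le_of_dvd one_pos this
    omega
  have adj2 : ∀ v : ZMod (4 * k), (mobiusLadder k).Adj v (v - 1) := by
    intro v
    rw [mobiusLadder, SimpleGraph.fromRel_adj]
    refine ⟨fun h => ?_, Or.inr (Or.inl (by ring))⟩
    have h1 : (1 : ZMod (4 * k)) = 0 := by
      have := sub_eq_self.mp h.symm
      exact this
    have := (ZMod.natCast_eq_zero_iff 1 (4 * k)).mp (by exact_mod_cast h1)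
    have := Nat.le_of_dvd one_pos this
    omega
  have adj3 : ∀ v : ZMod (4 * k), (mobiusLadder k).Adj v (v + κ) := by
    intro v
    rw [mobiusLadder, SimpleGraph.fromRel_adj]
    refine ⟨fun h => ?_, Or.inl (Or.inr (by rw [hκdef]; push_cast; ring))⟩
    have h1 : κ = 0 := (left_eq_add.mp h)
    rw [hκdef] at h1
    have := (ZMod.natCast_eq_zero_iff (2 * k) (4 * k)).mp h1
    have := Nat.le_of_dvd (by omega) this
    omega
  have hκκ : κ + κ = 0 := by
    rw [hκdef, ← Nat.cast_add, show 2 * k + 2 * k = 4 * k by ring, ZMod.natCast_self]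
  have hHH : ((r / 2 : ℝ) : AddCircle r) + ((r / 2 : ℝ) : AddCircle r) = 0 := by
    rw [← AddCircle.coe_add, show (r / 2 + r / 2 : ℝ) = r by ring, AddCircle.coe_period]
  -- the transformed map
  set g : ZMod (4 * k) → AddCircle r := fun v =>
    c v + (if Even v.val then 0 else ((r / 2 : ℝ) : AddCircle r)) with hgdef
  have hgeven : ∀ v : ZMod (4 * k), Even v.val → g v = c v := by
    intro v hv; simp only [hgdef, if_pos hv, add_zero]
  -- frame existence
  have frame : ∀ v : ZMod (4 * k), ∃ t : AddCircle r,
      dlift r hr (g v - t) < r / 2 ∧ dlift r hr (g (v + 1) - t) < r / 2 ∧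
      dlift r hr (g (v - 1) - t) < r / 2 ∧ r / 2 < dlift r hr (g (v + κ) - t) := by
    intro v
    obtain ⟨t, _, hvt, hnb⟩ := hc v
    have h1 := hnb _ (adj1 v)
    have h2 := hnb _ (adj2 v)
    have h3 := hnb _ (adj3 v)
    have hm1 := (dlift_mem hr (c (v + 1) - t)).2
    have hm2 := (dlift_mem hr (c (v - 1) - t)).2
    have hsucc : ∀ w : ZMod (4 * k), ¬ Even w.val → g w = c w + ((r / 2 : ℝ) : AddCircle r) := by
      intro w hw; simp only [hgdef, if_neg hw]
    have hpred : Even ((v - 1).val) ↔ ¬ Even v.val := by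
      have h := hval1 (v - 1)
      rw [sub_add_cancel] at h
      tauto
    by_cases hv : Even v.val
    · have hodd1 : ¬ Even ((v + 1).val) := (hval1 v).not.mpr (not_not_intro hv)
      have hodd2 : ¬ Even ((v - 1).val) := fun h => (hpred.mp h) hv
      have hevκ : Even ((v + κ).val) := (hvalκ v).mpr hv
      refine ⟨t, ?_, ?_, ?_, ?_⟩
      · rw [hgeven v hv]; exact hvt
      · have e : g (v + 1) - t = (c (v + 1) - t) + ((r / 2 : ℝ) : AddCircle r) := by
          rw [hsucc _ hodd1]; abel
        rw [e, dlift_add_half_far hr h1]; linarith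
      · have e : g (v - 1) - t = (c (v - 1) - t) + ((r / 2 : ℝ) : AddCircle r) := by
          rw [hsucc _ hodd2]; abel
        rw [e, dlift_add_half_far hr h2]; linarith
      · rw [hgeven _ hevκ]; exact h3
    · have hev1 : Even ((v + 1).val) := (hval1 v).mpr hv
      have hev2 : Even ((v - 1).val) := hpred.mpr hv
      have hoddκ : ¬ Even ((v + κ).val) := fun h => hv ((hvalκ v).mp h)
      refine ⟨t + ((r / 2 : ℝ) : AddCircle r), ?_, ?_, ?_, ?_⟩
      · have e : g v - (t + ((r / 2 : ℝ) : AddCircle r)) = c v - t := by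
          rw [hsucc _ hv]; abel
        rw [e]; exact hvt
      · have e : g (v + 1) - (t + ((r / 2 : ℝ) : AddCircle r))
            = (c (v + 1) - t) + ((r / 2 : ℝ) : AddCircle r) := by
          rw [hgeven _ hev1,
            show (c (v + 1) - t) + ((r / 2 : ℝ) : AddCircle r)
              = c (v + 1) - (t + ((r / 2 : ℝ) : AddCircle r))
                + (((r / 2 : ℝ) : AddCircle r) + ((r / 2 : ℝ) : AddCircle r)) by abel,
            hHH, add_zero]
        rw [e, dlift_add_half_far hr h1]; linarith
      · have e : g (v - 1) - (t + ((r / 2 : ℝ) : AddCircle r))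
            = (c (v - 1) - t) + ((r / 2 : ℝ) : AddCircle r) := by
          rw [hgeven _ hev2,
            show (c (v - 1) - t) + ((r / 2 : ℝ) : AddCircle r)
              = c (v - 1) - (t + ((r / 2 : ℝ) : AddCircle r))
                + (((r / 2 : ℝ) : AddCircle r) + ((r / 2 : ℝ) : AddCircle r)) by abel,
            hHH, add_zero]
        rw [e, dlift_add_half_far hr h2]; linarith
      · have e : g (v + κ) - (t + ((r / 2 : ℝ) : AddCircle r)) = c (v + κ) - t := by
          rw [hsucc _ hoddκ]; abel
        rw [e]; exact h3
  -- step and antipodal-difference functions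
  set σ : ZMod (4 * k) → ℝ := fun v => slift r hr (g (v + 1) - g v) with hσdef
  set μ : ZMod (4 * k) → ℝ := fun v => dlift r hr (g (v + κ) - g v) with hμdef
  have hR3 : ∀ v : ZMod (4 * k), slift r hr (g (v + 1 + 1) - g v) = σ v + σ (v + 1) := by
    intro v
    obtain ⟨t, hA, hB, hC, _⟩ := frame (v + 1)
    rw [show v + 1 - 1 = v by ring] at hC
    simp only [hσdef]
    rw [frame_slift hr hC hB, frame_slift hr hC hA, frame_slift hr hA hB]
    ring
  have hμmem : ∀ v : ZMod (4 * k), 0 < μ v ∧ μ v < r := by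
    intro v
    obtain ⟨t, hA, _, _, hD⟩ := frame v
    have h0 := (dlift_mem hr (g v - t)).1
    have h1 := (dlift_mem hr (g (v + κ) - t)).2
    simp only [hμdef]
    rw [frame_dlift hr hA hD]
    constructor <;> linarith
  have hμne : ∀ v : ZMod (4 * k), g (v + κ) - g v ≠ 0 := by
    intro v h
    have h2 := (hμmem v).1
    simp only [hμdef] at h2
    rw [h, dlift_zero hr] at h2
    exact lt_irrefl _ h2
  have hrec : ∀ v : ZMod (4 * k), μ (v + 1) = μ v + σ (v + κ) - σ v := by
    intro v
    obtain ⟨t₁, hA, _, hC, hD⟩ := frame (v + 1)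
    rw [show v + 1 - 1 = v by ring] at hC
    have e1 := frame_dlift hr hC hD
    have e2 := frame_dlift hr hA hD
    have e3 := frame_slift hr hC hA
    obtain ⟨t₂, hA', hB', _, hD'⟩ := frame (v + κ)
    rw [show v + κ + κ = v by rw [add_assoc, hκκ, add_zero]] at hD'
    have f1 := frame_dlift hr hA' hD'
    have f2 := frame_dlift hr hB' hD'
    have f3 := frame_slift hr hA' hB'
    have hp1 : 0 < dlift r hr (g v - g (v + κ)) := by rw [f1]; linarith
    have hp2 : 0 < dlift r hr (g v - g (v + κ + 1)) := by rw [f2]; linarith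
    have hn1 : g v - g (v + κ) ≠ 0 := by
      intro h; rw [h, dlift_zero hr] at hp1; exact lt_irrefl _ hp1
    have hn2 : g v - g (v + κ + 1) ≠ 0 := by
      intro h; rw [h, dlift_zero hr] at hp2; exact lt_irrefl _ hp2
    have g1 : dlift r hr (g (v + κ) - g v) = r - dlift r hr (g v - g (v + κ)) := by
      rw [show g (v + κ) - g v = -(g v - g (v + κ)) by abel, dlift_neg_eq hr hn1]
    have g2 : dlift r hr (g (v + κ + 1) - g v) = r - dlift r hr (g v - g (v + κ + 1)) := by
      rw [show g (v + κ + 1) - g v = -(g v - g (v + κ + 1)) by abel, dlift_neg_eq hr hn2]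
    rw [show v + κ + 1 = v + 1 + κ by ring] at f2 g2 hp2 hn2
    have hbridge : dlift r hr (g (v + 1 + κ) - t₂) = dlift r hr (g (v + κ + 1) - t₂) := by
      rw [show v + 1 + κ = v + κ + 1 by ring]
    simp only [hμdef, hσdef]
    linarith [e1, e2, e3, f1, f2, f3, g1, g2, hbridge]
  -- telescoping
  have key : ∀ m : ℕ, μ ((m : ℕ) : ZMod (4 * k)) = μ 0
      + ∑ j ∈ Finset.range m, (σ (((j : ℕ) : ZMod (4 * k)) + κ) - σ ((j : ℕ) : ZMod (4 * k))) := by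
    intro m
    induction m with
    | zero => simp
    | succ m ih =>
      rw [Finset.sum_range_succ,
        show ((m + 1 : ℕ) : ZMod (4 * k)) = ((m : ℕ) : ZMod (4 * k)) + 1 by push_cast; ring,
        hrec, ih]
      ring
  have hμ0κ : μ κ = r - μ 0 := by
    have hne : g (0 + κ) - g 0 ≠ 0 := hμne 0
    rw [zero_add] at hne
    simp only [hμdef]
    rw [hκκ, zero_add, show g 0 - g κ = -(g κ - g 0) by abel, dlift_neg_eq hr hne]
  have coesum : ∀ m : ℕ,
      ((∑ j ∈ Finset.range m, σ ((j : ℕ) : ZMod (4 * k)) : ℝ) : AddCircle r)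
      = g ((m : ℕ) : ZMod (4 * k)) - g 0 := by
    intro m
    induction m with
    | zero => simp
    | succ m ih =>
      rw [Finset.sum_range_succ, AddCircle.coe_add, ih]
      have h1 : ((σ ((m : ℕ) : ZMod (4 * k)) : ℝ) : AddCircle r)
          = g (((m : ℕ) : ZMod (4 * k)) + 1) - g ((m : ℕ) : ZMod (4 * k)) := by
        simp only [hσdef]; exact coe_slift hr _
      rw [h1, show ((m + 1 : ℕ) : ZMod (4 * k)) = ((m : ℕ) : ZMod (4 * k)) + 1 by push_cast; ring]
      abel
  obtain ⟨q, hq⟩ : ∃ q : ℤ,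
      (∑ j ∈ Finset.range (2 * k), σ ((j : ℕ) : ZMod (4 * k))) - μ 0 = q * r := by
    apply sub_eq_int_mul
    rw [coesum (2 * k)]
    have h1 : ((μ 0 : ℝ) : AddCircle r) = g (0 + κ) - g 0 := by
      simp only [hμdef]; exact coe_dlift hr _
    rw [h1, zero_add, hκdef]
  have hE := key (2 * k)
  rw [show (((2 * k : ℕ)) : ZMod (4 * k)) = κ from hκdef.symm, hμ0κ,
    Finset.sum_sub_distrib] at hE
  -- the final computation
  refine ⟨2 * q + 1, ⟨q, by ring⟩, ?_⟩
  have hterm : ∀ j : ℕ,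
      slift r hr (c ((2 * j + 2 : ℕ) : ZMod (4 * k)) - c ((2 * j : ℕ) : ZMod (4 * k)))
      = σ ((2 * j : ℕ) : ZMod (4 * k)) + σ ((2 * j + 1 : ℕ) : ZMod (4 * k)) := by
    intro j
    have he0 : Even (((2 * j : ℕ) : ZMod (4 * k)).val) := (hparnat _).mpr ⟨j, by ring⟩
    have he2 : Even (((2 * j + 2 : ℕ) : ZMod (4 * k)).val) := (hparnat _).mpr ⟨j + 1, by ring⟩
    rw [← hgeven _ he0, ← hgeven _ he2,
      show ((2 * j + 2 : ℕ) : ZMod (4 * k)) = ((2 * j : ℕ) : ZMod (4 * k)) + 1 + 1 by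
        push_cast; ring,
      hR3,
      show ((2 * j + 1 : ℕ) : ZMod (4 * k)) = ((2 * j : ℕ) : ZMod (4 * k)) + 1 by
        push_cast; ring]
  rw [Finset.sum_congr rfl (fun j _ => hterm j)]
  have pair : ∀ m : ℕ, (∑ j ∈ Finset.range m,
        (σ ((2 * j : ℕ) : ZMod (4 * k)) + σ ((2 * j + 1 : ℕ) : ZMod (4 * k))))
      = ∑ j ∈ Finset.range (2 * m), σ ((j : ℕ) : ZMod (4 * k)) := by
    intro m
    induction m with
    | zero => simp
    | succ m ih =>
      rw [Finset.sum_range_succ, ih, show 2 * (m + 1) = (2 * m + 1) + 1 by ring,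
        Finset.sum_range_succ, Finset.sum_range_succ]
      ring
  rw [pair (2 * k), show 2 * (2 * k) = 2 * k + 2 * k by ring, Finset.sum_range_add]
  have hshift : ∀ j : ℕ, σ ((2 * k + j : ℕ) : ZMod (4 * k)) = σ (((j : ℕ) : ZMod (4 * k)) + κ) := by
    intro j; congr 1; rw [hκdef]; push_cast; ring
  rw [Finset.sum_congr rfl (fun j _ => hshift j)]
  push_cast
  linear_combination (2 : ℝ) * hq - hE
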